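/- For fixed ε > 0, the map x ↦ Σⱼ √((Ψx)ⱼ² + ε²) is convex on ℝⁿ, and hence J_ε(x) = ‖Ax − d‖₂² + λ Σⱼ √((Ψx)ⱼ² + ε²) is convex for every λ ≥ 0; if additionally N(AᵀA) ∩ N(Ψ) = {0} and λ > 0, then J_ε is strictly convex and has a unique global minimizer. -/

import Mathlib

/-!
Each of the two terms of `J_ε` is a separable sum of convex functions of the coordinates of `A x`
and `Ψ x`; for `ε ≠ 0` the function `t ↦ √(t² + ε²)` is strictly convex because
`(x y + ε²)² < (x² + ε²)(y² + ε²)` whenever `x ≠ y`. Stacking the two measurements into the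
matrix `[A; Ψ]`, the kernel condition makes `x ↦ [A; Ψ] x` injective, so `J_ε` is a strictly
convex and coercive separable function of an injective linear image of `x`; a coercive continuous
function attains its minimum, and strict convexity makes the minimizer unique.
-/

open Set Filter Matrix

theorem strictConvexOn_sqrt_sq_add_sq {ε : ℝ} (hε : ε ≠ 0) :
    StrictConvexOn ℝ univ (fun t : ℝ => √(t ^ 2 + ε ^ 2)) := by
  refine ⟨convex_univ, fun x _ y _ hxy a b ha hb hab => ?_⟩
  have hX := Real.sq_sqrt (by positivity : 0 ≤ x ^ 2 + ε ^ 2)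
  have hY := Real.sq_sqrt (by positivity : 0 ≤ y ^ 2 + ε ^ 2)
  have hX0 := Real.sqrt_nonneg (x ^ 2 + ε ^ 2)
  have hY0 := Real.sqrt_nonneg (y ^ 2 + ε ^ 2)
  have hcs : x * y + ε ^ 2 < √(x ^ 2 + ε ^ 2) * √(y ^ 2 + ε ^ 2) := by
    have hgap : 0 < ε ^ 2 * (x - y) ^ 2 := by
      have := sub_ne_zero.mpr hxy
      positivity
    nlinarith [mul_nonneg hX0 hY0]
  simp only [smul_eq_mul]
  rw [Real.sqrt_lt' (by positivity)]
  calc (a * x + b * y) ^ 2 + ε ^ 2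
      = a ^ 2 * (x ^ 2 + ε ^ 2) + b ^ 2 * (y ^ 2 + ε ^ 2) + 2 * (a * b) * (x * y + ε ^ 2) := by
        linear_combination (-(ε ^ 2) * (1 + a + b)) * hab
    _ < a ^ 2 * (x ^ 2 + ε ^ 2) + b ^ 2 * (y ^ 2 + ε ^ 2)
          + 2 * (a * b) * (√(x ^ 2 + ε ^ 2) * √(y ^ 2 + ε ^ 2)) := by
        have := mul_pos ha hb
        gcongr
    _ = (a * √(x ^ 2 + ε ^ 2) + b * √(y ^ 2 + ε ^ 2)) ^ 2 := by
        linear_combination (-a ^ 2) * hX - b ^ 2 * hY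

theorem StrictConvexOn.const_mul {E : Type*} [AddCommMonoid E] [Module ℝ E] {s : Set E}
    {f : E → ℝ} (hf : StrictConvexOn ℝ s f) {c : ℝ} (hc : 0 < c) :
    StrictConvexOn ℝ s (fun x => c * f x) :=
  ⟨hf.1, fun x hx y hy hxy a b ha hb hab => by
    simpa only [smul_eq_mul, mul_add, mul_left_comm c] using
      mul_lt_mul_of_pos_left (hf.2 hx hy hxy ha hb hab) hc⟩

theorem StrictConvexOn.comp_linearMap_of_injective {𝕜 E F β : Type*} [Semiring 𝕜]
    [PartialOrder 𝕜] [AddCommMonoid E] [AddCommMonoid F] [Module 𝕜 E] [Module 𝕜 F]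
    [AddCommMonoid β] [PartialOrder β] [SMul 𝕜 β] {f : F → β} {s : Set F}
    (hf : StrictConvexOn 𝕜 s f) (g : E →ₗ[𝕜] F) (hg : Function.Injective g) :
    StrictConvexOn 𝕜 (g ⁻¹' s) (f ∘ g) :=
  ⟨hf.1.linear_preimage g, fun x hx y hy hxy a b ha hb hab => by
    simpa only [Function.comp_apply, map_add, map_smul] using
      hf.2 hx hy (hg.ne hxy) ha hb hab⟩

section SeparableSum

variable {ι : Type*} [Fintype ι]

theorem StrictConvexOn.sum_pi {E : ι → Type*} [∀ i, AddCommMonoid (E i)] [∀ i, Module ℝ (E i)]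
    {f : ∀ i, E i → ℝ} (hf : ∀ i, StrictConvexOn ℝ univ (f i)) :
    StrictConvexOn ℝ univ (fun u : ∀ i, E i => ∑ i, f i (u i)) := by
  refine ⟨convex_univ, fun x _ y _ hxy a b ha hb hab => ?_⟩
  obtain ⟨i, hi⟩ := Function.ne_iff.mp hxy
  calc ∑ j, f j ((a • x + b • y) j)
      < ∑ j, (a • f j (x j) + b • f j (y j)) :=
        Finset.sum_lt_sum (fun j _ => (hf j).convexOn.2 trivial trivial ha.le hb.le hab)
          ⟨i, Finset.mem_univ i, (hf i).2 trivial trivial hi ha hb hab⟩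
    _ = a • ∑ j, f j (x j) + b • ∑ j, f j (y j) := by
        rw [Finset.sum_add_distrib, Finset.smul_sum, Finset.smul_sum]

theorem tendsto_sum_pi_cocompact_atTop {X : ι → Type*} [∀ i, TopologicalSpace (X i)]
    {f : ∀ i, X i → ℝ} (hf : ∀ i, Tendsto (f i) (cocompact (X i)) atTop)
    (hf₀ : ∀ i x, 0 ≤ f i x) :
    Tendsto (fun u : ∀ i, X i => ∑ i, f i (u i)) (cocompact (∀ i, X i)) atTop := by
  rw [← coprodᵢ_cocompact, Filter.coprodᵢ, tendsto_iSup]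
  intro i
  exact tendsto_atTop_mono (fun u => Finset.single_le_sum (fun j _ => hf₀ j (u j))
    (Finset.mem_univ i)) ((hf i).comp tendsto_comap)

end SeparableSum

theorem strictConvexOn_sq_sub (c : ℝ) : StrictConvexOn ℝ univ (fun t : ℝ => (t - c) ^ 2) := by
  simpa only [Function.comp_def, preimage_univ, ← sub_eq_add_neg] using
    (Even.strictConvexOn_pow even_two two_ne_zero).translate_left (-c)

theorem tendsto_sq_sub_cocompact_atTop (c : ℝ) :
    Tendsto (fun t : ℝ => (t - c) ^ 2) (cocompact ℝ) atTop := by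
  simpa only [Function.comp_def, Real.dist_eq, sq_abs] using
    (tendsto_pow_atTop two_ne_zero).comp (tendsto_dist_right_cocompact_atTop c)

theorem tendsto_mul_sqrt_sq_add_sq_cocompact_atTop {c : ℝ} (hc : 0 < c) (ε : ℝ) :
    Tendsto (fun t : ℝ => c * √(t ^ 2 + ε ^ 2)) (cocompact ℝ) atTop :=
  tendsto_atTop_mono (fun _ => mul_le_mul_of_nonneg_left
      (Real.abs_le_sqrt (le_add_of_nonneg_right (sq_nonneg ε))) hc.le)
    (tendsto_norm_cocompact_atTop.const_mul_atTop hc)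

theorem Matrix.ker_mulVecLin_fromRows_eq_bot {R m₁ m₂ n : Type*} [CommSemiring R] [Fintype n]
    {A : Matrix m₁ n R} {B : Matrix m₂ n R} (h : ∀ x, A *ᵥ x = 0 → B *ᵥ x = 0 → x = 0) :
    LinearMap.ker (fromRows A B).mulVecLin = ⊥ := by
  refine LinearMap.ker_eq_bot'.mpr fun x hx => h x ?_ ?_
  · exact funext fun i => by simpa using congrFun hx (.inl i)
  · exact funext fun j => by simpa using congrFun hx (.inr j)

theorem StrictConvexOn.existsUnique_forall_le {E : Type*} [NormedAddCommGroup E]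
    [NormedSpace ℝ E] [FiniteDimensional ℝ E] {f : E → ℝ} (hf : StrictConvexOn ℝ univ f)
    (hlim : Tendsto f (cocompact E) atTop) : ∃! x, ∀ y, f x ≤ f y := by
  have hcont : Continuous f := continuousOn_univ.mp (hf.convexOn.continuousOn isOpen_univ)
  obtain ⟨x, hx⟩ := hcont.exists_forall_le hlim
  exact ⟨x, hx, fun y hy => hf.eq_of_isMinOn (isMinOn_univ_iff.mpr hy)
    (isMinOn_univ_iff.mpr hx) trivial trivial⟩

/-- The smoothed TV term `x ↦ Σⱼ √((Ψx)ⱼ² + ε²)` is convex; hence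
`J_ε(x) = ‖Ax − d‖² + λ Σⱼ √((Ψx)ⱼ² + ε²)` is convex for every `λ ≥ 0`, and
if moreover `N(AᵀA) ∩ N(Ψ) = {0}` and `λ > 0`, then `J_ε` is strictly convex
with a unique global minimizer. -/
theorem stmt_17 {m n s : ℕ} (A : Matrix (Fin m) (Fin n) ℝ)
    (Ψ : Matrix (Fin s) (Fin n) ℝ) (d : Fin m → ℝ) (ε : ℝ) (hε : 0 < ε) :
    ConvexOn ℝ Set.univ
      (fun x : Fin n → ℝ => ∑ j, Real.sqrt ((Ψ.mulVec x j) ^ 2 + ε ^ 2)) ∧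
    (∀ lam : ℝ, 0 ≤ lam →
      ConvexOn ℝ Set.univ (fun x : Fin n → ℝ =>
        (∑ i, (A.mulVec x i - d i) ^ 2)
          + lam * ∑ j, Real.sqrt ((Ψ.mulVec x j) ^ 2 + ε ^ 2))) ∧
    ((∀ x : Fin n → ℝ, (Aᵀ * A).mulVec x = 0 → Ψ.mulVec x = 0 → x = 0) →
      ∀ lam : ℝ, 0 < lam →
        StrictConvexOn ℝ Set.univ (fun x : Fin n → ℝ =>
          (∑ i, (A.mulVec x i - d i) ^ 2)
            + lam * ∑ j, Real.sqrt ((Ψ.mulVec x j) ^ 2 + ε ^ 2)) ∧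
        ∃! x : Fin n → ℝ, ∀ y : Fin n → ℝ,
          (∑ i, (A.mulVec x i - d i) ^ 2)
              + lam * ∑ j, Real.sqrt ((Ψ.mulVec x j) ^ 2 + ε ^ 2)
            ≤ (∑ i, (A.mulVec y i - d i) ^ 2)
              + lam * ∑ j, Real.sqrt ((Ψ.mulVec y j) ^ 2 + ε ^ 2)) := by
  have hφ := strictConvexOn_sqrt_sq_add_sq hε.ne'
  have hTV := (StrictConvexOn.sum_pi fun _ : Fin s => hφ).convexOn.comp_linearMap Ψ.mulVecLin
  have hLS := (StrictConvexOn.sum_pi fun i => strictConvexOn_sq_sub (d i)).convexOn.comp_linearMap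
    A.mulVecLin
  refine ⟨hTV, fun lam hlam => hLS.add (hTV.smul hlam), fun hker lam hlam => ?_⟩
  -- `J_ε` is a separable function of the stacked measurement `[A; Ψ] x`.
  set g : Fin m ⊕ Fin s → ℝ → ℝ :=
    Sum.elim (fun i t => (t - d i) ^ 2) (fun _ t => lam * √(t ^ 2 + ε ^ 2))
  have hJ : (fun x : Fin n → ℝ => (∑ i, (A.mulVec x i - d i) ^ 2)
      + lam * ∑ j, Real.sqrt ((Ψ.mulVec x j) ^ 2 + ε ^ 2))
      = (fun w => ∑ k, g k (w k)) ∘ (fromRows A Ψ).mulVecLin := by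
    ext x
    simp [g, Fintype.sum_sum_type, Finset.mul_sum]
  have hker' : LinearMap.ker (fromRows A Ψ).mulVecLin = ⊥ :=
    ker_mulVecLin_fromRows_eq_bot fun x hA hΨ => hker x (by rw [← mulVec_mulVec, hA, mulVec_zero]) hΨ
  have hstrict : StrictConvexOn ℝ univ (fun w : Fin m ⊕ Fin s → ℝ => ∑ k, g k (w k)) :=
    StrictConvexOn.sum_pi fun
      | .inl i => strictConvexOn_sq_sub (d i)
      | .inr _ => hφ.const_mul hlam
  have hlim : Tendsto (fun w : Fin m ⊕ Fin s → ℝ => ∑ k, g k (w k)) (cocompact _) atTop :=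
    tendsto_sum_pi_cocompact_atTop
      (fun | .inl i => tendsto_sq_sub_cocompact_atTop (d i)
           | .inr _ => tendsto_mul_sqrt_sq_add_sq_cocompact_atTop hlam ε)
      (fun | .inl _, _ => sq_nonneg _
           | .inr _, _ => mul_nonneg hlam.le (Real.sqrt_nonneg _))
  have hJstrict := hstrict.comp_linearMap_of_injective _ (LinearMap.ker_eq_bot.mp hker')
  have hJlim := hlim.comp (LinearMap.isClosedEmbedding_of_injective hker').tendsto_cocompact
  rw [← hJ] at hJstrict hJlim
  exact ⟨hJstrict, hJstrict.existsUnique_forall_le hJlim⟩
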